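/- The function u₂(r,θ) = √(3465/(32π)) · cos r · sin⁴r · sin(4θ) on the spherical triangle {(r,θ) : 0 < θ < π/2, 0 < r < π/2} satisfies -(1/sin r)∂_r(sin r ∂_r u) - (1/sin²r)∂²_θ u = 30 u. -/

import Mathlib

/-!
Separation of variables: `u₂` is a constant times `cos r * sin r ^ m * sin (m * θ)` with `m = 4`.
The angular factor satisfies `G'' = -m² G`, so it contributes `m² / sin² r`, while the radial
operator sends `cos r * sin r ^ m` to `((m + 1) (m + 2) - m² / sin² r)` times itself. The
`m² / sin² r` terms cancel, leaving the eigenvalue `(m + 1) (m + 2) = 30`.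
-/

open Real

noncomputable def u₂ (r θ : ℝ) : ℝ :=
  Real.sqrt (3465 / (32 * π)) * Real.cos r * Real.sin r ^ 4 * Real.sin (4 * θ)

noncomputable def radialLaplacian (F : ℝ → ℝ) (r : ℝ) : ℝ :=
  -(1 / sin r) * deriv (fun r' => sin r' * deriv F r') r

noncomputable def sphereLaplacian (u : ℝ → ℝ → ℝ) (r θ : ℝ) : ℝ :=
  radialLaplacian (fun r' => u r' θ) r - (1 / sin r ^ 2) * deriv (deriv fun θ' => u r θ') θ

theorem sphereLaplacian_const_mul_mul (C : ℝ) (F G : ℝ → ℝ) (r θ : ℝ) :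
    sphereLaplacian (fun r θ => C * F r * G θ) r θ =
      C * (G θ * radialLaplacian F r - F r / sin r ^ 2 * deriv (deriv G) θ) := by
  have hradial : (fun r' => sin r' * deriv (fun r'' => C * F r'' * G θ) r') =
      fun r' => C * G θ * (sin r' * deriv F r') := by
    funext r'
    simp only [mul_right_comm C _ (G θ), deriv_const_mul_field']
    ring
  simp only [sphereLaplacian, radialLaplacian, hradial, deriv_const_mul_field']
  ring

theorem deriv_deriv_sin_const_mul (k θ : ℝ) :
    deriv (deriv fun θ => sin (k * θ)) θ = -k ^ 2 * sin (k * θ) := by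
  have hsin : deriv (fun θ => sin (k * θ)) = fun θ => k * cos (k * θ) :=
    funext fun x => by simpa [mul_comm] using ((hasDerivAt_id x).const_mul k).sin.deriv
  have hcos : HasDerivAt (fun θ => k * cos (k * θ)) (k * (-sin (k * θ) * k)) θ := by
    simpa using ((hasDerivAt_id θ).const_mul k).cos.const_mul k
  rw [hsin, hcos.deriv]
  ring

theorem sin_mul_deriv_cos_mul_sin_pow (m : ℕ) (r : ℝ) :
    sin r * deriv (fun r => cos r * sin r ^ m) r =
      m * sin r ^ m - (m + 1) * sin r ^ (m + 2) := by
  rw [((hasDerivAt_cos r).fun_mul ((hasDerivAt_sin r).fun_pow m)).deriv]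
  rcases m with _ | m
  · push_cast
    ring
  · simp only [Nat.add_sub_cancel]
    push_cast
    linear_combination ((m + 1) * sin r ^ (m + 1)) * cos_sq_add_sin_sq r

theorem radialLaplacian_cos_mul_sin_pow (m : ℕ) {r : ℝ} (hr : sin r ≠ 0) :
    radialLaplacian (fun r => cos r * sin r ^ m) r =
      ((m + 1) * (m + 2) - m ^ 2 / sin r ^ 2) * (cos r * sin r ^ m) := by
  have hd : HasDerivAt (fun r => m * sin r ^ m - (m + 1) * sin r ^ (m + 2))
      (m * (m * sin r ^ (m - 1) * cos r) -
        (m + 1) * ((m + 2 : ℕ) * sin r ^ (m + 1) * cos r)) r :=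
    (((hasDerivAt_sin r).pow m).const_mul _).sub (((hasDerivAt_sin r).pow (m + 2)).const_mul _)
  rw [radialLaplacian, funext (sin_mul_deriv_cos_mul_sin_pow m), hd.deriv]
  rcases m with _ | m
  · push_cast
    field_simp
    ring
  · simp only [Nat.add_sub_cancel]
    push_cast
    field_simp
    ring

theorem u₂_eq : u₂ = fun r θ => √(3465 / (32 * π)) * (cos r * sin r ^ 4) * sin (4 * θ) := by
  funext r θ
  rw [u₂, mul_assoc _ (cos r)]

theorem stmt_6_general (r θ : ℝ) (hr : r ∈ Set.Ioo (0 : ℝ) (π / 2)) :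
    -(1 / Real.sin r) *
        deriv (fun r' => Real.sin r' * deriv (fun r'' => u₂ r'' θ) r') r -
      (1 / Real.sin r ^ 2) * deriv (deriv (fun θ' => u₂ r θ')) θ = 30 * u₂ r θ := by
  have hs : sin r ≠ 0 := (sin_pos_of_pos_of_lt_pi hr.1 (by linarith [hr.2, pi_pos])).ne'
  change sphereLaplacian u₂ r θ = _
  rw [u₂_eq, sphereLaplacian_const_mul_mul, radialLaplacian_cos_mul_sin_pow 4 hs,
    deriv_deriv_sin_const_mul]
  push_cast
  ring

theorem stmt_6 (r θ : ℝ) (hr : r ∈ Set.Ioo (0 : ℝ) (π / 2))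
    (hθ : θ ∈ Set.Ioo (0 : ℝ) (π / 2)) :
    -(1 / Real.sin r) *
        deriv (fun r' => Real.sin r' * deriv (fun r'' => u₂ r'' θ) r') r -
      (1 / Real.sin r ^ 2) * deriv (deriv (fun θ' => u₂ r θ')) θ = 30 * u₂ r θ :=
  stmt_6_general r θ hr
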